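/- Let n ≥ 3 be an integer, set a = 4(n-1)/(n-2) and p = 2n/(n-2), and let c > 0 be a real number. Then there exist a real number ε > 0, a real number λ ≠ 0, and a function u : ℝ^n → ℝ such that: u is continuous on the closed ball of radius ε centered at 0; u is C^∞ on the open ball B(0,ε); u(x) > 0 for every x in the closed ball; u(x) = c for every x with ‖x‖ = ε; and for every x ∈ B(0,ε), -a·Δu(x) = λ·u(x)^(p-1), where Δu(x) = Σ_{i=1}^n ∂²u/∂x_i²(x) is the Euclidean Laplacian and u(x)^(p-1) is the real power (well-defined since u(x) > 0). -/

import Mathlib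

open Metric

/-- The Euclidean Laplacian `Δu(x) = ∑ i, ∂²u/∂x_i²(x)` on `ℝⁿ`. -/
noncomputable def euclideanLaplacian {n : ℕ} (u : EuclideanSpace ℝ (Fin n) → ℝ)
    (x : EuclideanSpace ℝ (Fin n)) : ℝ :=
  ∑ i : Fin n,
    fderiv ℝ (fderiv ℝ u) x (EuclideanSpace.single i (1 : ℝ))
      (EuclideanSpace.single i (1 : ℝ))

section Aux

variable {E : Type*} [NormedAddCommGroup E] [InnerProductSpace ℝ E]

/-- Derivative of `y ↦ C * (1 + ‖y‖²) ^ r`. -/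
lemma yfsb_hasFDerivAt (C r : ℝ) (x : E) :
    HasFDerivAt (fun y : E => C * (1 + ‖y‖ ^ 2) ^ r)
      ((2 * C * r * (1 + ‖x‖ ^ 2) ^ (r - 1)) • innerSL ℝ x) x := by
  have hs : HasFDerivAt (fun y : E => 1 + ‖y‖ ^ 2) ((2 : ℕ) • innerSL ℝ x) x :=
    ((hasStrictFDerivAt_norm_sq x).hasFDerivAt).const_add 1
  have hpos : (0 : ℝ) < 1 + ‖x‖ ^ 2 := by positivity
  have hd : HasDerivAt (fun t : ℝ => t ^ r) (r * (1 + ‖x‖ ^ 2) ^ (r - 1)) (1 + ‖x‖ ^ 2) :=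
    Real.hasDerivAt_rpow_const (Or.inl hpos.ne')
  have h := (hd.comp_hasFDerivAt x hs).const_mul C
  refine h.congr_fderiv ?_
  ext v
  simp only [ContinuousLinearMap.smul_apply, ContinuousLinearMap.coe_smul', Pi.smul_apply,
    smul_eq_mul, nsmul_eq_mul, Nat.cast_ofNat]
  ring

lemma yfsb_contDiff (C r : ℝ) : ContDiff ℝ (⊤ : ℕ∞) (fun y : E => C * (1 + ‖y‖ ^ 2) ^ r) := by
  refine contDiff_const.mul ?_
  rw [contDiff_iff_contDiffAt]
  intro x
  refine ContDiffAt.rpow_const_of_ne ?_ ?_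
  · exact (contDiff_const.add (contDiff_norm_sq ℝ)).contDiffAt
  · positivity

end Aux

/-- The flat-metric case of the main theorem: on a sufficiently small ball, the Yamabe
equation `-aΔu = λ u^(p-1)` with constant positive Dirichlet boundary data `c` has a smooth
positive solution. -/
theorem yamabe_flat_small_ball (n : ℕ) (hn : 3 ≤ n)
    (a p : ℝ) (ha : a = 4 * ((n : ℝ) - 1) / ((n : ℝ) - 2))
    (hp : p = 2 * (n : ℝ) / ((n : ℝ) - 2))
    (c : ℝ) (hc : 0 < c) :
    ∃ (ε : ℝ) (lam : ℝ) (u : EuclideanSpace ℝ (Fin n) → ℝ),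
      0 < ε ∧ lam ≠ 0 ∧
      ContinuousOn u (closedBall (0 : EuclideanSpace ℝ (Fin n)) ε) ∧
      ContDiffOn ℝ (⊤ : ℕ∞) u (ball (0 : EuclideanSpace ℝ (Fin n)) ε) ∧
      (∀ x ∈ closedBall (0 : EuclideanSpace ℝ (Fin n)) ε, 0 < u x) ∧
      (∀ x : EuclideanSpace ℝ (Fin n), ‖x‖ = ε → u x = c) ∧
      (∀ x ∈ ball (0 : EuclideanSpace ℝ (Fin n)) ε,
        -a * euclideanLaplacian u x = lam * u x ^ (p - 1)) := by
  set E := EuclideanSpace ℝ (Fin n)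
  have hn3 : (3 : ℝ) ≤ (n : ℝ) := by exact_mod_cast hn
  have hn2 : (0 : ℝ) < (n : ℝ) - 2 := by linarith
  have hn2' : ((n : ℝ) - 2) ≠ 0 := hn2.ne'
  set m : ℝ := ((n : ℝ) - 2) / 2 with hm
  have hmpos : 0 < m := by positivity
  set γ : ℝ := c * (2 : ℝ) ^ m with hγdef
  have hγ : 0 < γ := mul_pos hc (Real.rpow_pos_of_pos two_pos m)
  set u : E → ℝ := fun y => γ * (1 + ‖y‖ ^ 2) ^ (-m) with hu
  set lam : ℝ := a * ((n : ℝ) * ((n : ℝ) - 2)) * γ ^ (2 - p) with hlam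
  have hapos : 0 < a := by
    rw [ha]; exact div_pos (by nlinarith) hn2
  have hlamne : lam ≠ 0 := by
    have : 0 < lam := by
      rw [hlam]
      have := Real.rpow_pos_of_pos hγ (2 - p)
      positivity
    exact this.ne'
  -- smoothness
  have hsmooth : ContDiff ℝ (⊤ : ℕ∞) u := yfsb_contDiff γ (-m)
  -- first derivative
  set κ : E → ℝ := fun y => 2 * γ * -m * (1 + ‖y‖ ^ 2) ^ (-m - 1) with hκ
  have hG : ∀ y : E, HasFDerivAt u (κ y • innerSL ℝ y) y := fun y => yfsb_hasFDerivAt γ (-m) y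
  have hfd : fderiv ℝ u = fun y => κ y • innerSL ℝ y := funext fun y => (hG y).fderiv
  -- second derivative
  have hκd : ∀ y : E, HasFDerivAt κ
      ((2 * (2 * γ * -m) * (-m - 1) * (1 + ‖y‖ ^ 2) ^ (-m - 1 - 1)) • innerSL ℝ y) y := by
    intro y
    have h := yfsb_hasFDerivAt (2 * γ * -m) (-m - 1) y
    convert h using 2 <;> ring
  let J : E →L[ℝ] E →L[ℝ] ℝ := innerSL ℝ
  have hG' : ∀ y : E, HasFDerivAt (fun z : E => κ z • innerSL ℝ z)
      (κ y • J +
        ((2 * (2 * γ * -m) * (-m - 1) * (1 + ‖y‖ ^ 2) ^ (-m - 1 - 1)) • innerSL ℝ y).smulRight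
          (innerSL ℝ y)) y := fun y =>
    (hκd y).smul J.hasFDerivAt
  refine ⟨1, lam, u, one_pos, hlamne, hsmooth.continuous.continuousOn,
    hsmooth.contDiffOn, ?_, ?_, ?_⟩
  · intro x _
    have : (0 : ℝ) < (1 + ‖x‖ ^ 2) ^ (-m) := Real.rpow_pos_of_pos (by positivity) _
    exact mul_pos hγ this
  · intro x hx
    rw [hu]
    simp only [hx]
    rw [show (1:ℝ) + 1 ^ 2 = 2 by norm_num, hγdef, mul_assoc, ← Real.rpow_add two_pos]
    simp
  · intro x hx
    have hs : (0 : ℝ) < 1 + ‖x‖ ^ 2 := by positivity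
    -- compute the Laplacian
    have h2 : fderiv ℝ (fderiv ℝ u) x =
        κ x • J +
        ((2 * (2 * γ * -m) * (-m - 1) * (1 + ‖x‖ ^ 2) ^ (-m - 1 - 1)) • innerSL ℝ x).smulRight
          (innerSL ℝ x) := by
      rw [hfd]; exact (hG' x).fderiv
    set σ : ℝ := 2 * (2 * γ * -m) * (-m - 1) * (1 + ‖x‖ ^ 2) ^ (-m - 1 - 1) with hσ
    have hlap : euclideanLaplacian u x = (n : ℝ) * κ x + σ * ‖x‖ ^ 2 := by
      unfold euclideanLaplacian
      rw [h2]
      have hterm : ∀ i : Fin n,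
          (κ x • J +
            (σ • innerSL ℝ x).smulRight (innerSL ℝ x)) (EuclideanSpace.single i (1 : ℝ))
            (EuclideanSpace.single i (1 : ℝ)) = κ x + σ * (x i * x i) := by
        intro i
        have hJ : ∀ v w : E, J v w = (inner ℝ v w : ℝ) := fun _ _ => rfl
        have hxi : (inner ℝ x (EuclideanSpace.single i (1:ℝ)) : ℝ) = x i := by
          rw [EuclideanSpace.inner_single_right]; simp
        have hii : (inner ℝ (EuclideanSpace.single i (1:ℝ))
            (EuclideanSpace.single i (1:ℝ)) : ℝ) = 1 := by
          rw [EuclideanSpace.inner_single_right]; simp [EuclideanSpace.single_apply]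
        simp only [ContinuousLinearMap.add_apply, ContinuousLinearMap.smul_apply,
          ContinuousLinearMap.smulRight_apply, smul_eq_mul, hJ, innerSL_apply_apply, hxi, hii]
        ring
      rw [Finset.sum_congr rfl fun i _ => hterm i]
      rw [Finset.sum_add_distrib, Finset.sum_const, ← Finset.mul_sum]
      have hsum : ∑ i : Fin n, x i * x i = ‖x‖ ^ 2 := by
        have := real_inner_self_eq_norm_sq x
        rw [← this, PiLp.inner_apply]
        simp [RCLike.inner_apply, sq]
      rw [hsum]
      simp [mul_comm]
    -- the two rpow identities
    have hupow : u x ^ (p - 1) = γ ^ (p - 1) * (1 + ‖x‖ ^ 2) ^ (-m * (p - 1)) := by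
      simp only [hu]
      rw [Real.mul_rpow hγ.le (Real.rpow_pos_of_pos hs _).le, ← Real.rpow_mul hs.le]
    have hexp : -m * (p - 1) = -m - 1 - 1 := by
      rw [hp, hm]; field_simp; ring
    have hγpow : γ ^ (2 - p) * γ ^ (p - 1) = γ := by
      rw [← Real.rpow_add hγ]
      norm_num
    have he1 : (1 + ‖x‖ ^ 2) ^ (-m - 1) = (1 + ‖x‖ ^ 2) ^ (-m - 1 - 1) * (1 + ‖x‖ ^ 2) := by
      have h := Real.rpow_add_one hs.ne' (-m - 1 - 1)
      rw [show -m - 1 - 1 + 1 = -m - 1 by ring] at h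
      exact h
    rw [hlap, hupow, hexp, hlam, hκ]
    simp only
    rw [he1, hσ]
    have hγγ : a * ((n : ℝ) * ((n : ℝ) - 2)) * γ ^ (2 - p) * (γ ^ (p - 1) *
        (1 + ‖x‖ ^ 2) ^ (-m - 1 - 1)) =
        a * ((n : ℝ) * ((n : ℝ) - 2)) * γ * (1 + ‖x‖ ^ 2) ^ (-m - 1 - 1) := by
      rw [show a * ((n : ℝ) * ((n : ℝ) - 2)) * γ ^ (2 - p) * (γ ^ (p - 1) *
        (1 + ‖x‖ ^ 2) ^ (-m - 1 - 1)) = a * ((n : ℝ) * ((n : ℝ) - 2)) *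
        (γ ^ (2 - p) * γ ^ (p - 1)) * (1 + ‖x‖ ^ 2) ^ (-m - 1 - 1) by ring, hγpow]
    rw [hγγ]
    set X : ℝ := (1 + ‖x‖ ^ 2) ^ (-m - 1 - 1) with hX
    set t : ℝ := ‖x‖ ^ 2 with ht
    rw [ha, hm]
    field_simp
    ring
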